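/- arXiv:2101.10855 — 4 statements merged into one kernel-verified Lean document; each statement's English description precedes it below -/
import Mathlib

section
/- Let M be a Hadamard manifold and π a probability measure on M with finite first-order moments, i.e. ∫ d(x, y₀) π(dx) < ∞ for some y₀ ∈ M. Then the function V_π(y) = ∫ (δ²[1 + (d(x,y)/δ)²]^{1/2} − δ²) π(dx) is finite-valued, strictly convex, tends to +∞ as y → ∞, and has a unique global minimiser x* ∈ M (the robust Riemannian barycentre of π). -/
open MeasureTheory

/-- A Hadamard space: a complete geodesic metric space satisfying the CAT(0)
(non-positive curvature) comparison inequality.  This abstracts a Hadamard manifold. -/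
class HadamardSpace (M : Type*) extends MetricSpace M where
  geo : M → M → ℝ → M
  geo_zero : ∀ x y : M, geo x y 0 = x
  geo_one : ∀ x y : M, geo x y 1 = y
  geo_dist : ∀ x y : M, ∀ s ∈ Set.Icc (0:ℝ) 1, ∀ t ∈ Set.Icc (0:ℝ) 1,
    dist (geo x y s) (geo x y t) = |s - t| * dist x y
  cat0 : ∀ x y z : M, ∀ t ∈ Set.Icc (0:ℝ) 1,
    dist (geo x y t) z ^ 2 ≤
      (1 - t) * dist x z ^ 2 + t * dist y z ^ 2 - t * (1 - t) * dist x y ^ 2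
  complete : CompleteSpace M

/-- The robust cost `V_x(y) = δ²[1 + (d(x,y)/δ)²]^{1/2} − δ²`. -/
noncomputable def huber {M : Type*} [MetricSpace M] (δ : ℝ) (x y : M) : ℝ :=
  δ ^ 2 * Real.sqrt (1 + (dist x y / δ) ^ 2) - δ ^ 2

/-!
Write `huber δ x y = δ √(δ² + d(x,y)²) − δ²`. Feeding the CAT(0) inequality for `d(x, γ_t)²` into
`u ↦ √(δ² + u²)` shows that each `huber δ x ·` is convex along geodesics, with a gain
`t(1−t) δ³ d(y,z)² / (2 (δ² + L²)^{3/2})` as soon as `d(x,y), d(x,z) ≤ L`. Integrating this gain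
over a ball of positive `π`-measure makes the energy strictly convex, and uniformly convex on
bounded sets. Since `huber ≥ δ d − δ²`, the energy is coercive, so minimising sequences stay
bounded; there the uniform convexity at midpoints makes them Cauchy, and completeness together with
continuity yields a minimiser, unique by strict convexity.
-/

namespace Real

theorem mul_sqrt_add_sq_le {δ a L : ℝ} (ha : 0 ≤ a) (haL : a ≤ L) :
    a * √(δ ^ 2 + L ^ 2) ≤ L * √(δ ^ 2 + a ^ 2) := by
  have hL : 0 ≤ L := ha.trans haL
  refine (pow_le_pow_iff_left₀ (by positivity) (by positivity) two_ne_zero).1 ?_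
  rw [mul_pow, mul_pow, sq_sqrt (by positivity), sq_sqrt (by positivity)]
  nlinarith [mul_nonneg (sq_nonneg δ) (sub_nonneg.2 (mul_le_mul haL haL ha hL))]

theorem le_sqrt_add_sq (δ a : ℝ) : a ≤ √(δ ^ 2 + a ^ 2) :=
  (le_abs_self a).trans (abs_le_sqrt (by nlinarith [sq_nonneg δ]))

theorem abs_sqrt_add_sq_sub_sqrt_add_sq_mul_le {δ a b L : ℝ} (hδ : 0 < δ) (ha : 0 ≤ a) (haL : a ≤ L)
    (hb : 0 ≤ b) (hbL : b ≤ L) :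
    |√(δ ^ 2 + a ^ 2) - √(δ ^ 2 + b ^ 2)| * √(δ ^ 2 + L ^ 2) ≤ L * |a - b| := by
  set p := √(δ ^ 2 + a ^ 2)
  set q := √(δ ^ 2 + b ^ 2)
  set Q := √(δ ^ 2 + L ^ 2)
  have hp : p ^ 2 = δ ^ 2 + a ^ 2 := sq_sqrt (by positivity)
  have hq : q ^ 2 = δ ^ 2 + b ^ 2 := sq_sqrt (by positivity)
  have hpq : 0 < p + q := add_pos_of_pos_of_nonneg (sqrt_pos.2 (by positivity)) (sqrt_nonneg _)
  have hfactor : (p - q) * (p + q) = (a - b) * (a + b) := by linear_combination hp - hq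
  have hsum : (a + b) * Q ≤ L * (p + q) := by
    linarith [mul_sqrt_add_sq_le (δ := δ) ha haL, mul_sqrt_add_sq_le (δ := δ) hb hbL]
  refine le_of_mul_le_mul_right ?_ hpq
  calc |p - q| * Q * (p + q) = |(p - q) * (p + q)| * Q := by
        rw [abs_mul, abs_of_pos hpq]; ring
    _ = |a - b| * ((a + b) * Q) := by
        rw [hfactor, abs_mul, abs_of_nonneg (add_nonneg ha hb)]; ring
    _ ≤ |a - b| * (L * (p + q)) := mul_le_mul_of_nonneg_left hsum (abs_nonneg _)
    _ = L * |a - b| * (p + q) := by ring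

theorem abs_sqrt_add_sq_sub_sqrt_add_sq_le {δ a b : ℝ} (hδ : 0 < δ) (ha : 0 ≤ a) (hb : 0 ≤ b) :
    |√(δ ^ 2 + a ^ 2) - √(δ ^ 2 + b ^ 2)| ≤ |a - b| := by
  have hL := abs_sqrt_add_sq_sub_sqrt_add_sq_mul_le hδ ha (le_max_left a b) hb (le_max_right a b)
  refine le_of_mul_le_mul_right (hL.trans ?_) (sqrt_pos.2 (by positivity))
  rw [mul_comm]
  exact mul_le_mul_of_nonneg_left (le_sqrt_add_sq δ _) (abs_nonneg _)

theorem sqrt_add_le_of_le_sq_sub {X A Q g : ℝ} (hX : 0 ≤ X) (hA : 0 < A) (hAQ : A ≤ Q)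
    (hg : 0 ≤ g) (h : X ≤ A ^ 2 - 2 * Q * g) : √X + g ≤ A := by
  have hAg : A * g ≤ Q * g := mul_le_mul_of_nonneg_right hAQ hg
  have hsq : X ≤ (A - g) ^ 2 := by nlinarith [sq_nonneg g]
  have hA_sub_g : 0 ≤ A - g := by
    have h : 0 ≤ A * (A - 2 * g) := by nlinarith
    linarith [(mul_nonneg_iff_of_pos_left hA).1 h]
  linarith [(sqrt_le_left hA_sub_g).2 hsq]

theorem sqrt_add_sq_add_le {δ a b c D L t : ℝ} (hδ : 0 < δ) (ha : 0 ≤ a) (haL : a ≤ L)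
    (hb : 0 ≤ b) (hbL : b ≤ L) (hab : |a - b| ≤ D) (ht₀ : 0 ≤ t) (ht₁ : t ≤ 1)
    (hc : c ^ 2 ≤ (1 - t) * a ^ 2 + t * b ^ 2 - t * (1 - t) * D ^ 2) :
    √(δ ^ 2 + c ^ 2) + t * (1 - t) * δ ^ 2 / (2 * √(δ ^ 2 + L ^ 2) ^ 3) * D ^ 2 ≤
      (1 - t) * √(δ ^ 2 + a ^ 2) + t * √(δ ^ 2 + b ^ 2) := by
  have hlip := abs_sqrt_add_sq_sub_sqrt_add_sq_mul_le hδ ha haL hb hbL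
  set p := √(δ ^ 2 + a ^ 2)
  set q := √(δ ^ 2 + b ^ 2)
  set Q := √(δ ^ 2 + L ^ 2)
  set A := (1 - t) * p + t * q
  set g := t * (1 - t) * δ ^ 2 / (2 * Q ^ 3) * D ^ 2
  have hp : p ^ 2 = δ ^ 2 + a ^ 2 := sq_sqrt (by positivity)
  have hq : q ^ 2 = δ ^ 2 + b ^ 2 := sq_sqrt (by positivity)
  have hQ : Q ^ 2 = δ ^ 2 + L ^ 2 := sq_sqrt (by positivity)
  have hQ₀ : 0 < Q := sqrt_pos.2 (by positivity)
  have hpQ : p ≤ Q := sqrt_le_sqrt (by nlinarith)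
  have hqQ : q ≤ Q := sqrt_le_sqrt (by nlinarith)
  have hA : δ ≤ A := by
    have hpδ : δ ≤ p := (le_abs_self δ).trans (abs_le_sqrt (by nlinarith))
    have hqδ : δ ≤ q := (le_abs_self δ).trans (abs_le_sqrt (by nlinarith))
    nlinarith
  have hAQ : A ≤ Q := by nlinarith
  have h1t : 0 ≤ 1 - t := by linarith
  have hg₀ : 0 ≤ g := by positivity
  have hg : g * (2 * Q ^ 3) = t * (1 - t) * δ ^ 2 * D ^ 2 := by
    simp only [g]; field_simp
  have hpqD : (p - q) ^ 2 * Q ^ 2 ≤ L ^ 2 * D ^ 2 := by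
    have h := hlip.trans (mul_le_mul_of_nonneg_left hab (ha.trans haL))
    nlinarith [abs_nonneg (p - q), sq_abs (p - q), mul_nonneg (abs_nonneg (p - q)) hQ₀.le]
  have hcA : δ ^ 2 + c ^ 2 ≤ A ^ 2 + t * (1 - t) * ((p - q) ^ 2 - D ^ 2) := by
    have hmix : (1 - t) * p ^ 2 + t * q ^ 2 = δ ^ 2 + (1 - t) * a ^ 2 + t * b ^ 2 := by
      rw [hp, hq]; ring
    have hconv : (1 - t) * p ^ 2 + t * q ^ 2 = A ^ 2 + t * (1 - t) * (p - q) ^ 2 := by ring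
    linarith
  -- `Q² = δ² + L²`, so the bound `(p - q)² Q² ≤ L² D²` leaves a defect `t(1-t) δ² D²` here.
  have hcQ : Q ^ 2 * (δ ^ 2 + c ^ 2) ≤ Q ^ 2 * (A ^ 2 - 2 * Q * g) := by
    have hQD : t * (1 - t) * D ^ 2 * Q ^ 2 = t * (1 - t) * D ^ 2 * (δ ^ 2 + L ^ 2) := by rw [hQ]
    have h2Qg : Q ^ 2 * (2 * Q * g) = t * (1 - t) * δ ^ 2 * D ^ 2 := by rw [← hg]; ring
    nlinarith [mul_le_mul_of_nonneg_left hcA (sq_nonneg Q),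
      mul_le_mul_of_nonneg_left hpqD (mul_nonneg ht₀ h1t)]
  exact sqrt_add_le_of_le_sq_sub (by positivity) (hδ.trans_le hA) hAQ hg₀
    (le_of_mul_le_mul_left hcQ (by positivity))

end Real

section huber

variable {M : Type*} [MetricSpace M] {δ : ℝ}

theorem huber_eq (hδ : 0 < δ) (x y : M) :
    huber δ x y = δ * √(δ ^ 2 + dist x y ^ 2) - δ ^ 2 := by
  have h : δ ^ 2 + dist x y ^ 2 = δ ^ 2 * (1 + (dist x y / δ) ^ 2) := by field_simp
  rw [huber, h, Real.sqrt_mul (sq_nonneg δ), Real.sqrt_sq hδ.le]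
  ring

theorem huber_nonneg (δ : ℝ) (x y : M) : 0 ≤ huber δ x y := by
  have h : 1 ≤ √(1 + (dist x y / δ) ^ 2) :=
    Real.one_le_sqrt.2 (le_add_of_nonneg_right (sq_nonneg _))
  unfold huber
  nlinarith [sq_nonneg δ]

theorem huber_le_mul_dist (hδ : 0 < δ) (x y : M) : huber δ x y ≤ δ * dist x y := by
  have h : √(δ ^ 2 + dist x y ^ 2) ≤ δ + dist x y :=
    (Real.sqrt_le_left (by positivity)).2 (by nlinarith [dist_nonneg (x := x) (y := y)])
  rw [huber_eq hδ]
  nlinarith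

theorem mul_dist_sub_sq_le_huber (hδ : 0 < δ) (x y : M) :
    δ * dist x y - δ ^ 2 ≤ huber δ x y := by
  rw [huber_eq hδ]
  nlinarith [Real.le_sqrt_add_sq δ (dist x y)]

theorem abs_huber_sub_huber_le (hδ : 0 < δ) (x y z : M) :
    |huber δ x y - huber δ x z| ≤ δ * dist y z := by
  have hyz : |dist x y - dist x z| ≤ dist y z := by
    simpa only [dist_comm x] using abs_dist_sub_le y z x
  have h := (Real.abs_sqrt_add_sq_sub_sqrt_add_sq_le hδ dist_nonneg dist_nonneg).trans hyz
  rw [huber_eq hδ, huber_eq hδ, sub_sub_sub_cancel_right, ← mul_sub, abs_mul, abs_of_pos hδ]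
  exact mul_le_mul_of_nonneg_left h hδ.le

theorem continuous_huber (δ : ℝ) (y : M) : Continuous fun x => huber δ x y := by
  unfold huber
  fun_prop

end huber

section Hadamard

open HadamardSpace

variable {M : Type*} [HadamardSpace M] {δ : ℝ}

theorem dist_geo_sq_le (x y z : M) {t : ℝ} (ht : t ∈ Set.Icc (0 : ℝ) 1) :
    dist x (geo y z t) ^ 2 ≤
      (1 - t) * dist x y ^ 2 + t * dist x z ^ 2 - t * (1 - t) * dist y z ^ 2 := by
  simpa only [dist_comm x] using cat0 y z x t ht

theorem huber_geo_add_le (hδ : 0 < δ) {x y z : M} {t L : ℝ} (ht : t ∈ Set.Icc (0 : ℝ) 1)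
    (hy : dist x y ≤ L) (hz : dist x z ≤ L) :
    huber δ x (geo y z t) + t * (1 - t) * δ ^ 3 / (2 * √(δ ^ 2 + L ^ 2) ^ 3) * dist y z ^ 2 ≤
      (1 - t) * huber δ x y + t * huber δ x z := by
  have hyz : |dist x y - dist x z| ≤ dist y z := by
    simpa only [dist_comm x] using abs_dist_sub_le y z x
  have h := Real.sqrt_add_sq_add_le hδ dist_nonneg hy dist_nonneg hz hyz ht.1 ht.2
    (dist_geo_sq_le x y z ht)
  rw [huber_eq hδ, huber_eq hδ, huber_eq hδ]
  have hδh := mul_le_mul_of_nonneg_left h hδ.le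
  have hgain : δ * (t * (1 - t) * δ ^ 2 / (2 * √(δ ^ 2 + L ^ 2) ^ 3) * dist y z ^ 2) =
      t * (1 - t) * δ ^ 3 / (2 * √(δ ^ 2 + L ^ 2) ^ 3) * dist y z ^ 2 := by ring
  linarith

theorem huber_geo_le (hδ : 0 < δ) (x y z : M) {t : ℝ} (ht : t ∈ Set.Icc (0 : ℝ) 1) :
    huber δ x (geo y z t) ≤ (1 - t) * huber δ x y + t * huber δ x z := by
  have h := huber_geo_add_le hδ ht (le_max_left (dist x y) (dist x z)) (le_max_right _ _)
  have : 0 ≤ t * (1 - t) * δ ^ 3 / (2 * √(δ ^ 2 + max (dist x y) (dist x z) ^ 2) ^ 3) *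
      dist y z ^ 2 := by
    have ht₀ := ht.1
    have ht₁ : 0 ≤ 1 - t := sub_nonneg.2 ht.2
    positivity
  linarith

end Hadamard

theorem exists_forall_le_of_midpoint_gain {X : Type*} [MetricSpace X] [CompleteSpace X]
    [Nonempty X] {V : X → ℝ} (hV : Continuous V) (hbdd : BddBelow (Set.range V)) (mid : X → X → X)
    {c κ : ℝ} (hc : ⨅ y, V y < c) (hκ : 0 < κ)
    (hgain : ∀ y z, V y < c → V z < c → V (mid y z) + κ * dist y z ^ 2 ≤ (V y + V z) / 2) :
    ∃ x, ∀ y, V x ≤ V y := by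
  obtain ⟨u, hanti, htend, hmem⟩ := exists_seq_tendsto_sInf (Set.range_nonempty V) hbdd
  choose y hy using hmem
  have hcauchy : CauchySeq y := by
    refine Metric.cauchySeq_iff'.2 fun ε hε => ?_
    have hlim : sInf (Set.range V) < min c (sInf (Set.range V) + κ * ε ^ 2) :=
      lt_min hc (lt_add_of_pos_right _ (by positivity))
    obtain ⟨N, hN⟩ := (htend.eventually (gt_mem_nhds hlim)).exists
    refine ⟨N, fun n hn => ?_⟩
    have hnN : u n ≤ u N := hanti hn
    obtain ⟨hNc, hNε⟩ := lt_min_iff.1 hN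
    have hgainN := hgain (y n) (y N) (by rw [hy]; linarith) (by rw [hy]; linarith)
    have hinf : sInf (Set.range V) ≤ V (mid (y n) (y N)) := csInf_le hbdd ⟨_, rfl⟩
    rw [hy, hy] at hgainN
    have hsq : κ * dist (y n) (y N) ^ 2 < κ * ε ^ 2 := by linarith
    exact lt_of_pow_lt_pow_left₀ 2 hε.le (lt_of_mul_lt_mul_left hsq hκ.le)
  obtain ⟨x, hx⟩ := cauchySeq_tendsto_of_complete hcauchy
  have hVx : V x = sInf (Set.range V) :=
    tendsto_nhds_unique ((hV.tendsto x).comp hx) (by simpa [Function.comp_def, hy] using htend)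
  exact ⟨x, fun z => hVx ▸ csInf_le hbdd ⟨z, rfl⟩⟩

section energy

variable {M : Type*} [MetricSpace M] [MeasurableSpace M] [BorelSpace M] {π : Measure M}
  {δ : ℝ} {y₀ : M}

/-- The paper's `V_π`. -/
noncomputable def huberEnergy (π : Measure M) (δ : ℝ) (y : M) : ℝ := ∫ x, huber δ x y ∂π

theorem integrable_huber [IsFiniteMeasure π] (hδ : 0 < δ)
    (hmom : Integrable (fun x => dist x y₀) π) (y : M) : Integrable (fun x => huber δ x y) π := by
  refine ((hmom.add (integrable_const (dist y₀ y))).const_mul δ).mono'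
    (continuous_huber δ y).aestronglyMeasurable (Filter.Eventually.of_forall fun x => ?_)
  rw [Real.norm_of_nonneg (huber_nonneg δ x y)]
  exact (huber_le_mul_dist hδ x y).trans (mul_le_mul_of_nonneg_left (dist_triangle x y₀ y) hδ.le)

theorem lipschitzWith_huberEnergy [IsProbabilityMeasure π] (hδ : 0 < δ)
    (hmom : Integrable (fun x => dist x y₀) π) : LipschitzWith ⟨δ, hδ.le⟩ (huberEnergy π δ) := by
  refine LipschitzWith.of_dist_le_mul fun y z => show _ ≤ δ * dist y z from ?_
  rw [Real.dist_eq, huberEnergy, huberEnergy,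
    ← integral_sub (integrable_huber hδ hmom y) (integrable_huber hδ hmom z)]
  simpa using norm_integral_le_of_norm_le_const (μ := π)
    (Filter.Eventually.of_forall fun x =>
      (Real.norm_eq_abs _).trans_le (abs_huber_sub_huber_le hδ x y z))

theorem sub_le_huberEnergy [IsProbabilityMeasure π] (hδ : 0 < δ)
    (hmom : Integrable (fun x => dist x y₀) π) (y : M) :
    δ * dist y₀ y - δ * ∫ x, dist x y₀ ∂π - δ ^ 2 ≤ huberEnergy π δ y := by
  have hpt : ∀ x, δ * dist y₀ y - δ * dist x y₀ - δ ^ 2 ≤ huber δ x y := fun x => by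
    nlinarith [mul_dist_sub_sq_le_huber hδ x y, dist_triangle_left y₀ y x]
  have hlin : Integrable (fun x => δ * dist y₀ y - δ * dist x y₀) π :=
    (integrable_const _).sub (hmom.const_mul δ)
  calc δ * dist y₀ y - δ * ∫ x, dist x y₀ ∂π - δ ^ 2
      = ∫ x, (δ * dist y₀ y - δ * dist x y₀ - δ ^ 2) ∂π := by
        rw [integral_sub hlin (integrable_const _), integral_sub (integrable_const _)
          (hmom.const_mul δ)]
        simp [integral_const_mul]
    _ ≤ huberEnergy π δ y :=
        integral_mono (hlin.sub (integrable_const _)) (integrable_huber hδ hmom y) hpt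

theorem exists_forall_lt_huberEnergy [IsProbabilityMeasure π] (hδ : 0 < δ)
    (hmom : Integrable (fun x => dist x y₀) π) (C : ℝ) :
    ∃ R : ℝ, ∀ y : M, R < dist y₀ y → C < huberEnergy π δ y := by
  refine ⟨(C + δ * ∫ x, dist x y₀ ∂π + δ ^ 2) / δ, fun y hy => ?_⟩
  rw [div_lt_iff₀ hδ] at hy
  linarith [sub_le_huberEnergy hδ hmom y]

end energy

theorem exists_measureReal_closedBall_pos {M : Type*} [MetricSpace M] [MeasurableSpace M]
    (π : Measure M) [IsFiniteMeasure π] [NeZero π] (y₀ : M) :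
    ∃ K : ℝ, 0 < π.real (Metric.closedBall y₀ K) := by
  by_contra! h
  have hball : ∀ n : ℕ, π (Metric.closedBall y₀ n) = 0 := fun n =>
    (measureReal_eq_zero_iff (measure_ne_top _ _)).1 (le_antisymm (h n) measureReal_nonneg)
  exact NeZero.ne π (Measure.measure_univ_eq_zero.1 <| by
    rw [← Metric.iUnion_closedBall_nat y₀]; exact measure_iUnion_null hball)

section HadamardEnergy

open HadamardSpace

variable {M : Type*} [HadamardSpace M] [MeasurableSpace M] [BorelSpace M] {π : Measure M}
  {δ : ℝ} {y₀ : M}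

theorem huberEnergy_geo_add_le [IsFiniteMeasure π] (hδ : 0 < δ)
    (hmom : Integrable (fun x => dist x y₀) π) {y z : M} {t K R : ℝ}
    (ht : t ∈ Set.Icc (0 : ℝ) 1) (hy : dist y₀ y ≤ R) (hz : dist y₀ z ≤ R) :
    huberEnergy π δ (geo y z t) + π.real (Metric.closedBall y₀ K) *
        (t * (1 - t) * δ ^ 3 / (2 * √(δ ^ 2 + (K + R) ^ 2) ^ 3)) * dist y z ^ 2 ≤
      (1 - t) * huberEnergy π δ y + t * huberEnergy π δ z := by
  set g := t * (1 - t) * δ ^ 3 / (2 * √(δ ^ 2 + (K + R) ^ 2) ^ 3) * dist y z ^ 2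
  have hball : MeasurableSet (Metric.closedBall y₀ K) := Metric.isClosed_closedBall.measurableSet
  have hpt : ∀ x, huber δ x (geo y z t) + (Metric.closedBall y₀ K).indicator (fun _ => g) x ≤
      (1 - t) * huber δ x y + t * huber δ x z := fun x => by
    by_cases hx : x ∈ Metric.closedBall y₀ K
    · rw [Set.indicator_of_mem hx]
      have hxK : dist x y₀ ≤ K := hx
      exact huber_geo_add_le hδ ht (by linarith [dist_triangle x y₀ y])
        (by linarith [dist_triangle x y₀ z])
    · rw [Set.indicator_of_notMem hx, add_zero]
      exact huber_geo_le hδ x y z ht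
  have hint := integrable_huber hδ hmom (π := π)
  have hind : Integrable ((Metric.closedBall y₀ K).indicator fun _ => g) π :=
    (integrable_const g).indicator hball
  calc huberEnergy π δ (geo y z t) + π.real (Metric.closedBall y₀ K) *
        (t * (1 - t) * δ ^ 3 / (2 * √(δ ^ 2 + (K + R) ^ 2) ^ 3)) * dist y z ^ 2
      = ∫ x, (huber δ x (geo y z t) + (Metric.closedBall y₀ K).indicator (fun _ => g) x) ∂π := by
        rw [integral_add (hint _) hind, integral_indicator_const _ hball, smul_eq_mul, mul_assoc]
        rfl
    _ ≤ ∫ x, ((1 - t) * huber δ x y + t * huber δ x z) ∂π :=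
        integral_mono ((hint _).add hind) (((hint y).const_mul _).add ((hint z).const_mul _)) hpt
    _ = (1 - t) * huberEnergy π δ y + t * huberEnergy π δ z := by
        rw [integral_add ((hint y).const_mul _) ((hint z).const_mul _), integral_const_mul,
          integral_const_mul]
        rfl

theorem huberEnergy_geo_lt [IsProbabilityMeasure π] (hδ : 0 < δ)
    (hmom : Integrable (fun x => dist x y₀) π) {y z : M} (hyz : y ≠ z) {t : ℝ}
    (ht : t ∈ Set.Ioo (0 : ℝ) 1) :
    huberEnergy π δ (geo y z t) < (1 - t) * huberEnergy π δ y + t * huberEnergy π δ z := by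
  obtain ⟨K, hK⟩ := exists_measureReal_closedBall_pos π y₀
  have h := huberEnergy_geo_add_le hδ hmom (K := K) (Set.Ioo_subset_Icc_self ht)
    (le_max_left (dist y₀ y) (dist y₀ z)) (le_max_right _ _)
  have ht₁ : 0 < 1 - t := sub_pos.2 ht.2
  have hyz' : 0 < dist y z := dist_pos.2 hyz
  have ht₀ := ht.1
  have : 0 < π.real (Metric.closedBall y₀ K) * (t * (1 - t) * δ ^ 3 /
      (2 * √(δ ^ 2 + (K + max (dist y₀ y) (dist y₀ z)) ^ 2) ^ 3)) * dist y z ^ 2 := by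
    positivity
  linarith

theorem exists_forall_huberEnergy_le [IsProbabilityMeasure π] (hδ : 0 < δ)
    (hmom : Integrable (fun x => dist x y₀) π) :
    ∃ x, ∀ y, huberEnergy π δ x ≤ huberEnergy π δ y := by
  have : Nonempty M := ⟨y₀⟩
  have : CompleteSpace M := HadamardSpace.complete
  have hbdd : BddBelow (Set.range (huberEnergy π δ)) :=
    ⟨0, Set.forall_mem_range.2 fun y => integral_nonneg fun x => huber_nonneg δ x y⟩
  obtain ⟨R, hR⟩ := exists_forall_lt_huberEnergy hδ hmom ((⨅ y, huberEnergy π δ y) + 1)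
  obtain ⟨K, hK⟩ := exists_measureReal_closedBall_pos π y₀
  refine exists_forall_le_of_midpoint_gain (lipschitzWith_huberEnergy hδ hmom).continuous hbdd
    (fun y z => geo y z (1 / 2)) (lt_add_one _) (κ := π.real (Metric.closedBall y₀ K) *
      (1 / 2 * (1 - 1 / 2) * δ ^ 3 / (2 * √(δ ^ 2 + (K + R) ^ 2) ^ 3))) (by positivity)
    fun y z hy hz => ?_
  have h := huberEnergy_geo_add_le hδ hmom (K := K) (t := 1 / 2) (by norm_num)
    (not_lt.1 fun h => (hR y h).not_gt hy) (not_lt.1 fun h => (hR z h).not_gt hz)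
  linarith

end HadamardEnergy

/-- Let `M` be a Hadamard manifold and `π` a probability measure on `M` with finite
first-order moments (`∫ d(x,y₀) π(dx) < ∞` for some `y₀`).  Then
`V_π(y) = ∫ (δ²[1 + (d(x,y)/δ)²]^{1/2} − δ²) π(dx)` is finite-valued (proper), strictly
convex along every geodesic, tends to `+∞` as `y → ∞`, and has a unique global minimiser
`x* ∈ M` — the robust Riemannian barycentre of `π`. -/
theorem stmt5 {M : Type*} [HadamardSpace M] [MeasurableSpace M] [BorelSpace M]
    (π : Measure M) [IsProbabilityMeasure π] (δ : ℝ) (hδ : 0 < δ)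
    (y₀ : M) (hmom : Integrable (fun x => dist x y₀) π) :
    (∀ y : M, Integrable (fun x => huber δ x y) π) ∧
      (∀ y z : M, y ≠ z → ∀ t ∈ Set.Ioo (0:ℝ) 1,
        (∫ x, huber δ x (HadamardSpace.geo y z t) ∂π)
          < (1 - t) * (∫ x, huber δ x y ∂π) + t * ∫ x, huber δ x z ∂π) ∧
      (∀ C : ℝ, ∃ R : ℝ, ∀ y : M, R < dist y₀ y → C < ∫ x, huber δ x y ∂π) ∧
      (∃! xstar : M, ∀ y : M, (∫ x, huber δ x xstar ∂π) ≤ ∫ x, huber δ x y ∂π) := by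
  refine ⟨integrable_huber hδ hmom, fun y z hyz t ht => huberEnergy_geo_lt hδ hmom hyz ht,
    exists_forall_lt_huberEnergy hδ hmom, ?_⟩
  obtain ⟨x, hx⟩ := exists_forall_huberEnergy_le hδ hmom
  refine ⟨x, hx, fun w (hw : ∀ y, huberEnergy π δ w ≤ huberEnergy π δ y) => by_contra fun hwx => ?_⟩
  have hmid := huberEnergy_geo_lt hδ hmom hwx (t := 1 / 2) (by norm_num)
  linarith [hw (HadamardSpace.geo w x (1 / 2)), hx w]
end

section
/- For the space H(N) of N×N Hermitian positive-definite matrices with its invariant metric, the Gaussian normalising factor equals Z(σ) = (ω₂(N)/2^{N²}) (2πσ²)^{N/2} exp(((N³−N)/6) σ²) ∏_{n=1}^{N−1} (1 − e^{−nσ²})^{N−n}, where ω₂(N) = (2π)^{(N²−N)/2} / (1!·2!···(N−1)!). -/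
open MeasureTheory

/-- The Stieltjes–Wigert weight `ρ(u,k) = exp(−log²(u)/k)`. -/
noncomputable def swRho (u k : ℝ) : ℝ := Real.exp (-(Real.log u) ^ 2 / k)

/-- The Vandermonde determinant `V(u) = ∏_{i<j} (u_j − u_i)`. -/
noncomputable def vandermonde {N : ℕ} (u : Fin N → ℝ) : ℝ :=
  ∏ p ∈ Finset.univ.filter (fun p : Fin N × Fin N => p.1 < p.2), (u p.2 - u p.1)

/-- `ω₂(N) = (2π)^{(N²−N)/2} / (1!·2!⋯(N−1)!)`. -/
noncomputable def omega2 (N : ℕ) : ℝ :=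
  (2 * Real.pi) ^ ((N ^ 2 - N) / 2) / ∏ k ∈ Finset.range N, (Nat.factorial k : ℝ)

/-!
Andréief's identity writes `∫ ∏ ρ(uᵢ) V(u)²` as `N!` times the Hankel determinant of the moments
of `ρ`. After the substitution `u = eˣ` these are Gaussian moment generating values,
`∫₀^∞ ρ(u, 2s) uᵏ du = √(2πs) e^{(k+1)² s/2}`, so the Hankel matrix is a diagonal rescaling of
the Vandermonde matrix at the nodes `qⁱ`, `q = eˢ`. Its determinant `∏_{i<j} (qʲ - qⁱ)` factors
as `q^{Σ j²} ∏ₙ (1 - q⁻ⁿ)^{N-n}`, and the powers of `e^{s/2}` collect into `e^{(N³-N)s/6}`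
against the prefactor `e^{-N³s/2}`.
-/

open Real Finset

section Andreief

open Matrix

variable {𝕜 α ι : Type*} [RCLike 𝕜] [MeasurableSpace α] {μ : Measure α} [SigmaFinite μ]
  [Fintype ι] [DecidableEq ι]

theorem integrable_det_columnwise {F : ι → ι → α → 𝕜} (hF : ∀ i j, Integrable (F i j) μ) :
    Integrable (fun x : ι → α => (of fun i j => F i j (x j)).det) (Measure.pi fun _ => μ) := by
  simp only [det_apply', of_apply]
  exact integrable_finsetSum _ fun σ _ => (Integrable.fintype_prod fun i => hF _ _).const_mul _

theorem integral_det_columnwise {F : ι → ι → α → 𝕜} (hF : ∀ i j, Integrable (F i j) μ) :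
    ∫ x : ι → α, (of fun i j => F i j (x j)).det ∂Measure.pi (fun _ => μ) =
      (of fun i j => ∫ y, F i j y ∂μ).det := by
  simp only [det_apply', of_apply]
  rw [integral_finsetSum _ fun σ _ => (Integrable.fintype_prod fun i => hF _ _).const_mul _]
  refine sum_congr rfl fun σ _ => ?_
  rw [integral_const_mul, integral_fintype_prod_eq_prod (fun i y => F (σ i) i y)]

/-- Andréief's identity. -/
theorem integral_det_mul_det {φ ψ : ι → α → 𝕜}
    (h : ∀ i j, Integrable (fun y => φ i y * ψ j y) μ) :
    ∫ x : ι → α, (of fun i j => φ i (x j)).det * (of fun i j => ψ i (x j)).det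
        ∂Measure.pi (fun _ => μ) =
      (Fintype.card ι).factorial * (of fun i j => ∫ y, φ i y * ψ j y ∂μ).det := by
  have expand : ∀ x : ι → α, (of fun i j => φ i (x j)).det * (of fun i j => ψ i (x j)).det =
      ∑ τ : Equiv.Perm ι, (Equiv.Perm.sign τ : 𝕜) *
        (of fun i j => ψ (τ j) (x j) * φ i (x j)).det := by
    intro x
    simp only [det_apply' (of fun i j => ψ i (x j)), of_apply, mul_sum]
    refine sum_congr rfl fun τ _ => ?_
    have scaled : (of fun i j => ψ (τ j) (x j) * φ i (x j)).det =
        (∏ j, ψ (τ j) (x j)) * (of fun i j => φ i (x j)).det :=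
      det_mul_row _ (of fun i j => φ i (x j))
    rw [scaled]
    ring
  have hτ : ∀ τ : Equiv.Perm ι, ∀ i j, Integrable (fun y => ψ (τ j) y * φ i y) μ :=
    fun τ i j => by simpa only [mul_comm] using h i (τ j)
  simp_rw [expand]
  rw [integral_finsetSum _ fun τ _ => (integrable_det_columnwise (hτ τ)).const_mul _]
  have permuted : ∀ τ : Equiv.Perm ι, (Equiv.Perm.sign τ : 𝕜) *
      (of fun i j => ∫ y, ψ (τ j) y * φ i y ∂μ).det =
        (of fun i j => ∫ y, φ i y * ψ j y ∂μ).det := by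
    intro τ
    have hsub : (of fun i j => ∫ y, ψ (τ j) y * φ i y ∂μ) =
        (of fun i j => ∫ y, φ i y * ψ j y ∂μ).submatrix id τ := by
      ext i j; simp only [of_apply, submatrix_apply, id, mul_comm]
    rw [hsub, det_permute', ← mul_assoc, ← Int.cast_mul, ← Units.val_mul, Int.units_mul_self,
      Units.val_one, Int.cast_one, one_mul]
  simp_rw [integral_const_mul, integral_det_columnwise (hτ _), permuted, sum_const, card_univ,
    Fintype.card_perm, nsmul_eq_mul]

end Andreief

theorem vandermonde_eq_det {N : ℕ} (u : Fin N → ℝ) :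
    vandermonde u = (Matrix.of fun i j : Fin N => u j ^ (i : ℕ)).det := by
  have transpose : (Matrix.of fun i j : Fin N => u j ^ (i : ℕ)) =
      (Matrix.vandermonde u).transpose := rfl
  rw [transpose, Matrix.det_transpose, Matrix.det_vandermonde, vandermonde, prod_filter,
    Fintype.prod_prod_type]
  refine prod_congr rfl fun i _ => ?_
  rw [← prod_filter]
  congr 1
  ext j; simp

theorem integral_prod_mul_vandermonde_sq {N : ℕ} {μ : Measure ℝ} [SigmaFinite μ] {w : ℝ → ℝ}
    (hw : ∀ k : ℕ, Integrable (fun x => w x * x ^ k) μ) :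
    ∫ u : Fin N → ℝ, (∏ i, w (u i)) * vandermonde u ^ 2 ∂Measure.pi (fun _ => μ) =
      N.factorial * (Matrix.of fun i j : Fin N => ∫ x, w x * x ^ ((i : ℕ) + j) ∂μ).det := by
  have factor : ∀ u : Fin N → ℝ, (∏ i, w (u i)) * vandermonde u ^ 2 =
      (Matrix.of fun i j : Fin N => w (u j) * u j ^ (i : ℕ)).det *
        (Matrix.of fun i j : Fin N => u j ^ (i : ℕ)).det := by
    intro u
    rw [vandermonde_eq_det, sq, ← mul_assoc]
    exact congrArg (· * _)
      (Matrix.det_mul_row (fun j => w (u j)) (Matrix.of fun i j : Fin N => u j ^ (i : ℕ))).symm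
  simp_rw [factor, pow_add, ← mul_assoc]
  simpa using integral_det_mul_det (μ := μ) (φ := fun (i : Fin N) x => w x * x ^ (i : ℕ))
    (ψ := fun j x => x ^ (j : ℕ)) fun i j => by simpa [pow_add, mul_assoc] using hw (i + j)

section ExpSubstitution

variable {E : Type*} [NormedAddCommGroup E] [NormedSpace ℝ E]

theorem integral_Ioi_zero_eq_integral_exp_smul_comp_exp (g : ℝ → E) :
    ∫ y in Set.Ioi 0, g y = ∫ x, exp x • g (exp x) := by
  rw [← range_exp, ← Set.image_univ, integral_image_eq_integral_abs_deriv_smul MeasurableSet.univ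
    (fun x _ => (hasDerivAt_exp x).hasDerivWithinAt) exp_injective.injOn, Measure.restrict_univ]
  simp only [abs_of_pos (exp_pos _)]

theorem integrableOn_Ioi_zero_iff_integrable_exp_smul_comp_exp (g : ℝ → E) :
    IntegrableOn g (Set.Ioi 0) ↔ Integrable (fun x => exp x • g (exp x)) := by
  rw [← range_exp, ← Set.image_univ, integrableOn_image_iff_integrableOn_abs_deriv_smul
    MeasurableSet.univ (fun x _ => (hasDerivAt_exp x).hasDerivWithinAt) exp_injective.injOn,
    IntegrableOn, Measure.restrict_univ]
  simp only [abs_of_pos (exp_pos _)]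

end ExpSubstitution

section GaussianLinearTerm

variable {s : ℝ}

theorem exp_mul_mul_exp_neg_sq_div (hs : s ≠ 0) (t x : ℝ) :
    exp (t * x) * exp (-x ^ 2 / (2 * s)) =
      exp (s * t ^ 2 / 2) * exp (-(1 / (2 * s)) * (x - s * t) ^ 2) := by
  rw [← exp_add, ← exp_add]
  congr 1
  field_simp
  ring

theorem integrable_exp_mul_mul_exp_neg_sq_div (hs : 0 < s) (t : ℝ) :
    Integrable (fun x => exp (t * x) * exp (-x ^ 2 / (2 * s))) := by
  simp_rw [exp_mul_mul_exp_neg_sq_div hs.ne']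
  exact ((integrable_exp_neg_mul_sq (by positivity)).comp_sub_right (s * t)).const_mul _

theorem integral_exp_mul_mul_exp_neg_sq_div (hs : 0 < s) (t : ℝ) :
    ∫ x, exp (t * x) * exp (-x ^ 2 / (2 * s)) = √(2 * π * s) * exp (s * t ^ 2 / 2) := by
  simp_rw [exp_mul_mul_exp_neg_sq_div hs.ne']
  rw [integral_const_mul, integral_sub_right_eq_self (fun x => exp (-(1 / (2 * s)) * x ^ 2)),
    integral_gaussian, mul_comm]
  congr 2
  field_simp

end GaussianLinearTerm

section LogNormalMoments

variable {s : ℝ}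

theorem exp_smul_swRho_exp_mul_pow (k : ℕ) (x : ℝ) :
    exp x • (swRho (exp x) (2 * s) * exp x ^ k) = exp ((k + 1) * x) * exp (-x ^ 2 / (2 * s)) := by
  rw [swRho, log_exp, smul_eq_mul, ← exp_nat_mul, add_one_mul, exp_add]
  ring

theorem integrableOn_swRho_mul_pow (hs : 0 < s) (k : ℕ) :
    IntegrableOn (fun u => swRho u (2 * s) * u ^ k) (Set.Ioi 0) := by
  rw [integrableOn_Ioi_zero_iff_integrable_exp_smul_comp_exp]
  simp_rw [exp_smul_swRho_exp_mul_pow]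
  exact integrable_exp_mul_mul_exp_neg_sq_div hs _

theorem integral_swRho_mul_pow (hs : 0 < s) (k : ℕ) :
    ∫ u in Set.Ioi 0, swRho u (2 * s) * u ^ k = √(2 * π * s) * exp ((k + 1) ^ 2 * s / 2) := by
  rw [integral_Ioi_zero_eq_integral_exp_smul_comp_exp]
  simp_rw [exp_smul_swRho_exp_mul_pow]
  rw [integral_exp_mul_mul_exp_neg_sq_div hs]
  ring_nf

end LogNormalMoments

section PairProducts

variable {M : Type*} [CommMonoid M]

theorem prod_Ioi_sub_eq_prod_Ico_pow (h : ℕ → M) :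
    ∀ N : ℕ, ∏ i : Fin N, ∏ j ∈ Ioi i, h (j - i) = ∏ n ∈ Ico 1 N, h n ^ (N - n)
  | 0 => by simp
  | N + 1 => by
    rw [Fin.prod_univ_succ, Fin.prod_Ioi_zero]
    simp_rw [Fin.prod_Ioi_succ, Fin.val_succ, Nat.add_sub_add_right, Fin.val_zero, Nat.sub_zero]
    rw [prod_Ioi_sub_eq_prod_Ico_pow h N, Fin.prod_univ_eq_prod_range (fun j => h (j + 1)),
      ← Nat.Ico_zero_eq_range, prod_Ico_add', zero_add,
      prod_subset (f := fun n => h n ^ (N - n)) (Ico_subset_Ico_right (N.le_add_right 1))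
        fun n hn hn' => ?_, ← prod_mul_distrib]
    · refine prod_congr rfl fun n hn => ?_
      rw [← pow_succ', ← Nat.sub_add_comm (Nat.lt_succ_iff.1 (mem_Ico.1 hn).2)]
    · rw [show n = N by simp only [mem_Ico] at hn hn'; omega, Nat.sub_self, pow_zero]

theorem prod_Ioi_eq_prod_pow {N : ℕ} (g : Fin N → M) :
    ∏ i, ∏ j ∈ Ioi i, g j = ∏ j, g j ^ (j : ℕ) := by
  rw [prod_comm' (t' := univ) (s' := fun j => Iio j) (by simp)]
  simp [Fin.card_Iio]

end PairProducts

theorem prod_Ioi_exp_mul_sub_exp_mul (s : ℝ) (N : ℕ) :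
    ∏ i : Fin N, ∏ j ∈ Ioi i, (exp ((j : ℕ) * s) - exp ((i : ℕ) * s)) =
      exp (s * ∑ j : Fin N, ((j : ℕ) : ℝ) ^ 2) *
        ∏ n ∈ Ico 1 N, (1 - exp (-n * s)) ^ (N - n) := by
  have factor : ∀ i : Fin N, ∀ j ∈ Ioi i, exp ((j : ℕ) * s) - exp ((i : ℕ) * s) =
      exp ((j : ℕ) * s) * (1 - exp (-((j - i : ℕ) : ℝ) * s)) := by
    intro i j hj
    rw [Nat.cast_sub (Fin.lt_def.1 (mem_Ioi.1 hj)).le, mul_sub, mul_one, ← exp_add]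
    ring_nf
  simp_rw [prod_congr rfl fun i _ => prod_congr rfl (factor i), prod_mul_distrib,
    prod_Ioi_sub_eq_prod_Ico_pow (fun n => 1 - exp (-n * s)), prod_Ioi_eq_prod_pow, ← exp_nat_mul,
    ← exp_sum, mul_sum]
  congr 2
  exact sum_congr rfl fun j _ => by ring

theorem sum_two_mul_add_one_sq (N : ℕ) :
    ∑ i : Fin N, (2 * ((i : ℕ) : ℝ) + 1) ^ 2 = N * (4 * (N : ℝ) ^ 2 - 1) / 3 := by
  rw [Fin.sum_univ_eq_sum_range (fun i => (2 * (i : ℝ) + 1) ^ 2)]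
  induction N with
  | zero => simp
  | succ N ih => rw [sum_range_succ, ih]; push_cast; ring

theorem det_hankel_exp_add_one_sq (c s : ℝ) (N : ℕ) :
    (Matrix.of fun i j : Fin N => c * exp ((((i : ℕ) : ℝ) + (j : ℕ) + 1) ^ 2 * s / 2)).det =
      c ^ N * exp (N * (4 * (N : ℝ) ^ 2 - 1) / 6 * s) *
        ∏ n ∈ Ico 1 N, (1 - exp (-n * s)) ^ (N - n) := by
  -- `(i + j + 1)² = (i + 1)² + (j² + 2j) + 2ij`
  have entry : (Matrix.of fun i j : Fin N => c * exp ((((i : ℕ) : ℝ) + (j : ℕ) + 1) ^ 2 * s / 2)) =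
      Matrix.diagonal (fun i : Fin N => c * exp ((((i : ℕ) : ℝ) + 1) ^ 2 * s / 2)) *
        Matrix.vandermonde (fun i : Fin N => exp ((i : ℕ) * s)) *
        Matrix.diagonal (fun j : Fin N => exp ((((j : ℕ) : ℝ) ^ 2 + 2 * (j : ℕ)) * s / 2)) := by
    ext i j
    rw [Matrix.mul_diagonal, Matrix.diagonal_mul, Matrix.of_apply, Matrix.vandermonde_apply,
      ← exp_nat_mul, mul_assoc, mul_assoc, ← exp_add, ← exp_add]
    ring_nf
  rw [entry, Matrix.det_mul, Matrix.det_mul, Matrix.det_diagonal, Matrix.det_diagonal,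
    Matrix.det_vandermonde, prod_Ioi_exp_mul_sub_exp_mul, prod_mul_distrib, prod_const, card_univ,
    Fintype.card_fin]
  have exponent : (∏ i : Fin N, exp ((((i : ℕ) : ℝ) + 1) ^ 2 * s / 2)) *
      exp (s * ∑ i : Fin N, ((i : ℕ) : ℝ) ^ 2) *
        ∏ i : Fin N, exp ((((i : ℕ) : ℝ) ^ 2 + 2 * (i : ℕ)) * s / 2) =
      exp (N * (4 * (N : ℝ) ^ 2 - 1) / 6 * s) := by
    rw [← exp_sum, ← exp_sum, ← exp_add, ← exp_add, mul_sum, ← sum_add_distrib,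
      ← sum_add_distrib, show N * (4 * (N : ℝ) ^ 2 - 1) / 6 * s =
        s / 2 * ∑ i : Fin N, (2 * ((i : ℕ) : ℝ) + 1) ^ 2 by rw [sum_two_mul_add_one_sq]; ring,
      mul_sum]
    exact congrArg exp (sum_congr rfl fun i _ => by ring)
  rw [← exponent]
  ring

theorem stmt8_general (N : ℕ) (σ : ℝ) (hσ : 0 < σ) :
    (omega2 N / (2 ^ (N ^ 2) * (Nat.factorial N : ℝ))) *
        Real.exp (-(N : ℝ) ^ 3 * σ ^ 2 / 2) *
        (∫ u in (Set.univ : Set (Fin N)).pi (fun _ => Set.Ioi (0 : ℝ)),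
          (∏ i, swRho (u i) (2 * σ ^ 2)) * |vandermonde u| ^ 2) =
      (omega2 N / 2 ^ (N ^ 2)) * (2 * Real.pi * σ ^ 2) ^ ((N : ℝ) / 2) *
        Real.exp (((N : ℝ) ^ 3 - (N : ℝ)) / 6 * σ ^ 2) *
        ∏ n ∈ Finset.Ico 1 N, (1 - Real.exp (-(n : ℝ) * σ ^ 2)) ^ (N - n) := by
  have hs : 0 < σ ^ 2 := by positivity
  rw [volume_pi, Measure.restrict_pi_pi]
  simp_rw [sq_abs]
  rw [integral_prod_mul_vandermonde_sq (integrableOn_swRho_mul_pow hs)]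
  simp_rw [integral_swRho_mul_pow hs, Nat.cast_add]
  rw [det_hankel_exp_add_one_sq, rpow_div_two_eq_sqrt _ (by positivity), rpow_natCast,
    show ((N : ℝ) ^ 3 - N) / 6 * σ ^ 2 = -(N : ℝ) ^ 3 * σ ^ 2 / 2 + N * (4 * N ^ 2 - 1) / 6 * σ ^ 2
      by ring, exp_add]
  field_simp

/-- For `H(N)`, the Gaussian normalising factor
`Z(σ) = (ω₂(N)/(2^{N²} N!)) e^{−N³σ²/2} ∫_{ℝ₊^N} ∏ᵢ ρ(uᵢ,2σ²) |V(u)|² ∏ duᵢ`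
equals the closed form
`(ω₂(N)/2^{N²}) (2πσ²)^{N/2} exp(((N³−N)/6)σ²) ∏_{n=1}^{N−1}(1 − e^{−nσ²})^{N−n}`. -/
theorem stmt8 (N : ℕ) (hN : 0 < N) (σ : ℝ) (hσ : 0 < σ) :
    (omega2 N / (2 ^ (N ^ 2) * (Nat.factorial N : ℝ))) *
        Real.exp (-(N : ℝ) ^ 3 * σ ^ 2 / 2) *
        (∫ u in (Set.univ : Set (Fin N)).pi (fun _ => Set.Ioi (0 : ℝ)),
          (∏ i, swRho (u i) (2 * σ ^ 2)) * |vandermonde u| ^ 2) =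
      (omega2 N / 2 ^ (N ^ 2)) * (2 * Real.pi * σ ^ 2) ^ ((N : ℝ) / 2) *
        Real.exp (((N : ℝ) ^ 3 - (N : ℝ)) / 6 * σ ^ 2) *
        ∏ n ∈ Finset.Ico 1 N, (1 - Real.exp (-(n : ℝ) * σ ^ 2)) ^ (N - n) :=
  stmt8_general N σ hσ
end

section
/- Let M be a Riemannian symmetric space, x̄ ∈ M, and let π(x) ∝ exp(−(d²(y,x) + d²(x,z))/(2σ²)) be the posterior density with equal likelihood and prior variances. If x̂ is the midpoint of the geodesic from z to y, then the geodesic symmetry s at x̂ leaves π invariant (it swaps y and z), and consequently the Riemannian barycentre of π equals x̂, i.e. the MMS estimator coincides with the MAP estimator when σ² = τ². -/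
/-!
The geodesic symmetry `s` at the midpoint of `z` and `y` is an isometry swapping `y` and `z`,
so it preserves the posterior density `exp(-(d²(y,x) + d²(x,z))/(2σ²))`; as it also preserves
the volume, it preserves the posterior `π`. Hence `s` preserves the Fréchet function
`w ↦ ∫ d²(w,u) dπ(u)`, so it maps its unique minimiser, the barycentre, to itself. The only
fixed point of `s` is the midpoint.
-/

open MeasureTheory

namespace MeasureTheory.MeasurePreserving

variable {α : Type*} [MeasurableSpace α] {μ : Measure α} {e : α → α}

theorem map_withDensity_of_comp_eq (he : MeasurePreserving e μ μ) (hemb : MeasurableEmbedding e)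
    {f : α → ENNReal} (hf : ∀ x, f (e x) = f x) :
    Measure.map e (μ.withDensity f) = μ.withDensity f := by
  ext A hA
  rw [Measure.map_apply hemb.measurable hA, withDensity_apply _ (hemb.measurable hA),
    withDensity_apply _ hA]
  calc ∫⁻ a in e ⁻¹' A, f a ∂μ = ∫⁻ a in e ⁻¹' A, f (e a) ∂μ := by simp only [hf]
    _ = ∫⁻ a in A, f a ∂μ := he.setLIntegral_comp_preimage_emb hemb f A

end MeasureTheory.MeasurePreserving

namespace IsometryEquiv

variable {M : Type*} [MetricSpace M]

theorem dist_sq_add_dist_sq_of_swap (s : M ≃ᵢ M) {y z : M} (hsy : s y = z) (hsz : s z = y)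
    (w : M) : dist y (s w) ^ 2 + dist (s w) z ^ 2 = dist y w ^ 2 + dist w z ^ 2 := by
  have hy : dist y (s w) = dist w z := by rw [← hsz, s.dist_eq, dist_comm]
  have hz : dist (s w) z = dist y w := by rw [← hsy, s.dist_eq, dist_comm]
  rw [hy, hz, add_comm]

variable [MeasurableSpace M] [BorelSpace M]

theorem integral_comp_dist_apply_of_map_eq {E : Type*} [NormedAddCommGroup E] [NormedSpace ℝ E]
    (s : M ≃ᵢ M) {π : Measure M} (hπ : Measure.map s π = π) (φ : ℝ → E) (w : M) :
    ∫ u, φ (dist (s w) u) ∂π = ∫ u, φ (dist w u) ∂π := by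
  have hs : MeasurePreserving s π π := ⟨s.continuous.measurable, hπ⟩
  rw [← hs.integral_comp s.toHomeomorph.measurableEmbedding]
  simp only [s.dist_eq]

end IsometryEquiv

theorem stmt14_general {M : Type*} [MetricSpace M] [MeasurableSpace M] [BorelSpace M]
    (vol : Measure M) (σ : ℝ) (y z xhat : M)
    (s : M ≃ᵢ M) (hsvol : Measure.map (⇑s) vol = vol)
    (hsy : s y = z) (hsz : s z = y)
    (hfix : ∀ w : M, s w = w ↔ w = xhat)
    (π : Measure M)
    (hπ : π = vol.withDensity fun w =>
      ENNReal.ofReal (Real.exp (-(dist y w ^ 2 + dist w z ^ 2) / (2 * σ ^ 2))))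
    (b : M)
    (hb : ∀ w : M, (∫ u, dist b u ^ 2 ∂π) ≤ ∫ u, dist w u ^ 2 ∂π)
    (hb_unique : ∀ b' : M,
      (∀ w : M, (∫ u, dist b' u ^ 2 ∂π) ≤ ∫ u, dist w u ^ 2 ∂π) → b' = b) :
    Measure.map (⇑s) π = π ∧ b = xhat := by
  have hmap : Measure.map s π = π := by
    rw [hπ]
    refine MeasurePreserving.map_withDensity_of_comp_eq ⟨s.continuous.measurable, hsvol⟩
      s.toHomeomorph.measurableEmbedding fun w => ?_
    rw [s.dist_sq_add_dist_sq_of_swap hsy hsz]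
  have hsb : s b = b := by
    refine hb_unique (s b) fun w => ?_
    rw [s.integral_comp_dist_apply_of_map_eq hmap (· ^ 2)]
    exact hb w
  exact ⟨hmap, (hfix b).mp hsb⟩

/-- Equality of the MAP and MMS estimators when `σ² = τ²`.  `M` is a Riemannian symmetric
space of non-compact type (hence Hadamard), abstracted by its metric measure structure:
`vol` is the Riemannian volume (preserved by the isometry `s`), and `s` is the geodesic
symmetry at the midpoint `xhat` of the geodesic from `z` to `y`: it is an isometry which
swaps `y` and `z` and has `xhat` as its unique fixed point.  Let
`π ∝ exp(−(d²(y,x)+d²(x,z))/(2σ²)) vol(dx)` be the posterior with equal likelihood and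
prior variances, and let `b` be its (unique) Riemannian barycentre.  Then `s` leaves `π`
invariant, and consequently `b = xhat`, i.e. the MMS estimator coincides with the MAP
estimator. -/
theorem stmt14 {M : Type*} [MetricSpace M] [MeasurableSpace M] [BorelSpace M]
    (vol : Measure M) (σ : ℝ) (hσ : 0 < σ) (y z xhat : M)
    (s : M ≃ᵢ M) (hsvol : Measure.map (⇑s) vol = vol)
    (hsy : s y = z) (hsz : s z = y)
    (hfix : ∀ w : M, s w = w ↔ w = xhat)
    (π : Measure M)
    (hπ : π = vol.withDensity fun w =>
      ENNReal.ofReal (Real.exp (-(dist y w ^ 2 + dist w z ^ 2) / (2 * σ ^ 2))))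
    (hvar : ∀ w : M, Integrable (fun u => dist w u ^ 2) π)
    (b : M)
    (hb : ∀ w : M, (∫ u, dist b u ^ 2 ∂π) ≤ ∫ u, dist w u ^ 2 ∂π)
    (hb_unique : ∀ b' : M,
      (∀ w : M, (∫ u, dist b' u ^ 2 ∂π) ≤ ∫ u, dist w u ^ 2 ∂π) → b' = b) :
    Measure.map (⇑s) π = π ∧ b = xhat :=
  stmt14_general vol σ y z xhat s hsvol hsy hsz hfix π hπ b hb hb_unique
end

section
/- Consider the Riemannian AR(1) Markov chain x_{t+1} = x_t #_μ y_{t+1} on a Hadamard manifold M, where y_{t+1} ~ P i.i.d., P has finite second moments, x* is the Riemannian barycentre of P, and V(x) = d²(x*, x)/2. Then the one-step transition kernel satisfies the drift inequality Q_μ V(x) ≤ (1−μ)² V(x) + μ² E(x*) for all x ∈ M, where E(x) = (1/2)∫ d²(x,y) P(dy). -/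
open MeasureTheory

/-!
The CAT(0) inequality, integrated against `P`, gives two facts. Integrating over the point
from which distances are measured, and comparing with the minimality of `x*` at the points of
the geodesic from `x` to `x*`, yields the variance inequality
`d(x*, x)² + ∫ d(x*, y)² ≤ ∫ d(x, y)²` in the limit `t → 1`. Integrating over the endpoint `y`
of the geodesic from `x` bounds `∫ d(x*, x #_μ y)²` by
`(1 - μ) d(x*, x)² + μ ∫ d(x*, y)² - μ (1 - μ) ∫ d(x, y)²`, and the variance inequality turns
the negative term into `-μ (1 - μ) (d(x*, x)² + ∫ d(x*, y)²)`.
-/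

namespace HadamardSpace

variable {M : Type*} [HadamardSpace M] [MeasurableSpace M] (P : Measure M)
  [IsProbabilityMeasure P]

theorem integral_dist_geo_sq_le {x x' : M} (hx : Integrable (fun y => dist x y ^ 2) P)
    (hx' : Integrable (fun y => dist x' y ^ 2) P) {t : ℝ} (ht : t ∈ Set.Icc (0:ℝ) 1) :
    ∫ y, dist (geo x x' t) y ^ 2 ∂P ≤
      (1 - t) * ∫ y, dist x y ^ 2 ∂P + t * ∫ y, dist x' y ^ 2 ∂P
        - t * (1 - t) * dist x x' ^ 2 := by
  calc ∫ y, dist (geo x x' t) y ^ 2 ∂P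
      ≤ ∫ y, ((1 - t) * dist x y ^ 2 + t * dist x' y ^ 2 - t * (1 - t) * dist x x' ^ 2) ∂P :=
        integral_mono_of_nonneg (.of_forall fun _ => sq_nonneg _) (by fun_prop)
          (.of_forall fun y => cat0 x x' y t ht)
    _ = _ := by
        rw [integral_sub (by fun_prop) (by fun_prop), integral_add (by fun_prop) (by fun_prop),
          integral_const_mul, integral_const_mul, integral_const]
        simp

theorem integral_dist_geo_endpoint_sq_le {z x : M} (hz : Integrable (fun y => dist z y ^ 2) P)
    (hx : Integrable (fun y => dist x y ^ 2) P) {t : ℝ} (ht : t ∈ Set.Icc (0:ℝ) 1) :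
    ∫ y, dist z (geo x y t) ^ 2 ∂P ≤
      (1 - t) * dist z x ^ 2 + t * ∫ y, dist z y ^ 2 ∂P
        - t * (1 - t) * ∫ y, dist x y ^ 2 ∂P := by
  calc ∫ y, dist z (geo x y t) ^ 2 ∂P
      ≤ ∫ y, ((1 - t) * dist z x ^ 2 + t * dist z y ^ 2 - t * (1 - t) * dist x y ^ 2) ∂P := by
        refine integral_mono_of_nonneg (.of_forall fun _ => sq_nonneg _) (by fun_prop)
          (.of_forall fun y => ?_)
        have hcat := cat0 x y z t ht
        rwa [dist_comm x z, dist_comm y z, dist_comm (geo x y t) z] at hcat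
    _ = _ := by
        rw [integral_sub (by fun_prop) (by fun_prop), integral_add (by fun_prop) (by fun_prop),
          integral_const_mul, integral_const_mul, integral_const_mul, integral_const]
        simp

open Filter Topology in
theorem variance_inequality {xstar x : M} (hxstar : Integrable (fun y => dist xstar y ^ 2) P)
    (hx : Integrable (fun y => dist x y ^ 2) P)
    (hmin : IsMinOn (fun z => ∫ y, dist z y ^ 2 ∂P) Set.univ xstar) :
    dist xstar x ^ 2 + ∫ y, dist xstar y ^ 2 ∂P ≤ ∫ y, dist x y ^ 2 ∂P := by
  have hgeo : ∀ t ∈ Set.Ioo (0:ℝ) 1,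
      t * dist xstar x ^ 2 ≤ ∫ y, dist x y ^ 2 ∂P - ∫ y, dist xstar y ^ 2 ∂P := by
    intro t ⟨ht0, ht1⟩
    have hcat := integral_dist_geo_sq_le P hx hxstar ⟨ht0.le, ht1.le⟩
    have hle := isMinOn_univ_iff.mp hmin (geo x xstar t)
    rw [dist_comm x xstar] at hcat
    nlinarith
  have hlim : Tendsto (fun t : ℝ => t * dist xstar x ^ 2) (𝓝[<] 1) (𝓝 (dist xstar x ^ 2)) :=
    ((continuous_id.mul continuous_const).tendsto' 1 _ (one_mul _)).mono_left nhdsWithin_le_nhds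
  linarith [le_of_tendsto hlim (mem_of_superset (Ioo_mem_nhdsLT zero_lt_one) hgeo)]

end HadamardSpace

theorem stmt18_general {M : Type*} [HadamardSpace M] [MeasurableSpace M]
    (P : Measure M) [IsProbabilityMeasure P]
    (hmom : ∀ x : M, Integrable (fun y => dist x y ^ 2) P)
    (xstar : M)
    (hbary : ∀ x : M, ((1:ℝ)/2) * (∫ y, dist xstar y ^ 2 ∂P) ≤ (1/2) * ∫ y, dist x y ^ 2 ∂P)
    (μ : ℝ) (hμ : μ ∈ Set.Ioo (0:ℝ) 1) (x : M) :
    (∫ y, dist xstar (HadamardSpace.geo x y μ) ^ 2 / 2 ∂P)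
      ≤ (1 - μ) ^ 2 * (dist xstar x ^ 2 / 2) + μ ^ 2 * ((1/2) * ∫ y, dist xstar y ^ 2 ∂P) := by
  have hmin : IsMinOn (fun z => ∫ y, dist z y ^ 2 ∂P) Set.univ xstar :=
    isMinOn_univ_iff.mpr fun z => by linarith [hbary z]
  have hvar := HadamardSpace.variance_inequality P (hmom xstar) (hmom x) hmin
  have hcat := HadamardSpace.integral_dist_geo_endpoint_sq_le P (hmom xstar) (hmom x)
    (Set.Ioo_subset_Icc_self hμ)
  have hμ' : 0 ≤ μ * (1 - μ) := mul_nonneg hμ.1.le (sub_nonneg.mpr hμ.2.le)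
  rw [integral_div]
  nlinarith [mul_le_mul_of_nonneg_left hvar hμ']

/-- Drift inequality for the Riemannian AR(1) model `x_{t+1} = x_t #_μ y_{t+1}` on a
Hadamard manifold `M`, with i.i.d. inputs `y ~ P`, where `P` has finite second moments and
Riemannian barycentre `x*` (the global minimiser of `E(x) = (1/2)∫ d²(x,y) P(dy)`).
With `V(x) = d²(x*,x)/2`, the one-step transition kernel satisfies
`Q_μ V(x) = 𝔼[V(x #_μ y)] ≤ (1−μ)² V(x) + μ² E(x*)` for every `x ∈ M` and `μ ∈ (0,1)`. -/
theorem stmt18 {M : Type*} [HadamardSpace M] [MeasurableSpace M] [BorelSpace M]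
    (P : Measure M) [IsProbabilityMeasure P]
    (hmom : ∀ x : M, Integrable (fun y => dist x y ^ 2) P)
    (xstar : M)
    (hbary : ∀ x : M, ((1:ℝ)/2) * (∫ y, dist xstar y ^ 2 ∂P) ≤ (1/2) * ∫ y, dist x y ^ 2 ∂P)
    (μ : ℝ) (hμ : μ ∈ Set.Ioo (0:ℝ) 1) (x : M) :
    (∫ y, dist xstar (HadamardSpace.geo x y μ) ^ 2 / 2 ∂P)
      ≤ (1 - μ) ^ 2 * (dist xstar x ^ 2 / 2) + μ ^ 2 * ((1/2) * ∫ y, dist xstar y ^ 2 ∂P) :=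
  stmt18_general P hmom xstar hbary μ hμ x
end
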